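/- Let (Ω, F, P) be a finite probability space and let Y_0, Y_1, …, Y_n be a martingale with respect to a filter F_0 ⊆ F_1 ⊆ ⋯ ⊆ F_n of σ-subfields of F with F_0 = {∅, Ω}. Suppose that Σ_{j=1}^n ( ran(Y_j | F_{j−1}) )² ≤ r̂² almost surely, for some real r̂. Then for any real t > 0, P( |Y_n − Y_0| ≥ t ) ≤ 2·exp( −2t²/r̂² ). -/

import Mathlib

open MeasureTheory

/-- The atom of the σ-field `m'` containing `ω` (on a finite space this is the smallest
`m'`-measurable set containing `ω`). -/
def condAtom {Ω : Type*} (m' : MeasurableSpace Ω) (ω : Ω) : Set Ω :=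
  ⋂₀ {s | MeasurableSet[m'] s ∧ ω ∈ s}

/-- The conditional range `ran(f ∣ m') = ess sup(f ∣ m') + ess sup(−f ∣ m')`: on the atom
of `m'` containing `ω`, the essential supremum of `f` (resp. `−f`) over that atom, i.e. the
supremum of the values of `f` (resp. `−f`) at the points of the atom of positive measure. -/
noncomputable def condRange {Ω : Type*} [MeasurableSpace Ω] (μ : Measure Ω)
    (m' : MeasurableSpace Ω) (f : Ω → ℝ) (ω : Ω) : ℝ :=
  sSup {y | ∃ ω' ∈ condAtom m' ω, μ {ω'} ≠ 0 ∧ f ω' = y} +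
  sSup {y | ∃ ω' ∈ condAtom m' ω, μ {ω'} ≠ 0 ∧ -f ω' = y}

/-!
On an atom of `F (j - 1)` of positive mass, `Y j` has mean `Y (j - 1)` under the conditional law
and lies a.s. in an interval of length `ran(Y j | F (j - 1))`, so Hoeffding's lemma for that law
shows that
`Z k = exp (s (Y k - Y 0) - s² / 8 · ∑_{j ≤ k} ran(Y j | F (j - 1))²)`
is a supermartingale. Hence `E Z n ≤ 1`, and since the sum of squared ranges is at most `r²`, the
moment generating function of `Y n - Y 0` is at most `exp (s² r² / 8)`: `Y n - Y 0` is sub-Gaussian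
with parameter `r² / 4`, and the Chernoff bound on both tails gives `2 exp (-2 t² / r²)`.
-/

open ProbabilityTheory Real

lemma coe_nnnorm_div_two_sq (x : ℝ) : (((‖x‖₊ / 2) ^ 2 : NNReal) : ℝ) = x ^ 2 / 4 := by
  simp only [NNReal.coe_pow, NNReal.coe_div, NNReal.coe_ofNat, coe_nnnorm, Real.norm_eq_abs,
    div_pow, sq_abs]
  norm_num

section condAtom

variable {Ω : Type*} {m : MeasurableSpace Ω} {ω ω' : Ω}

lemma condAtom_eq_measurableAtom (m : MeasurableSpace Ω) (ω : Ω) :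
    condAtom m ω = @measurableAtom Ω m ω := by
  ext x
  simpa [condAtom, measurableAtom] using forall_congr' fun _ => imp.swap

lemma mem_condAtom_self (ω : Ω) : ω ∈ condAtom m ω := by
  rw [condAtom_eq_measurableAtom]
  exact mem_measurableAtom_self ω

lemma condAtom_subset {s : Set Ω} (hs : MeasurableSet[m] s) (hω : ω ∈ s) :
    condAtom m ω ⊆ s := by
  rw [condAtom_eq_measurableAtom]
  exact measurableAtom_subset hs hω

lemma condAtom_eq_of_mem (h : ω' ∈ condAtom m ω) : condAtom m ω' = condAtom m ω := by
  simp only [condAtom_eq_measurableAtom] at h ⊢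
  exact measurableAtom_eq_of_mem h

lemma measurableSet_condAtom [Countable Ω] (ω : Ω) : MeasurableSet[m] (condAtom m ω) := by
  rw [condAtom_eq_measurableAtom]
  exact MeasurableSet.measurableAtom_of_countable ω

lemma Measurable.eq_of_mem_condAtom {β : Type*} [MeasurableSpace β] [MeasurableSingletonClass β]
    {g : Ω → β} (hg : Measurable[m] g) (h : ω' ∈ condAtom m ω) : g ω' = g ω :=
  condAtom_subset (hg (measurableSet_singleton (g ω))) rfl h

lemma measurable_of_forall_mem_condAtom [Countable Ω] {β : Type*} [MeasurableSpace β]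
    {g : Ω → β} (h : ∀ ω ω', ω' ∈ condAtom m ω → g ω' = g ω) : Measurable[m] g := by
  intro t _
  have : g ⁻¹' t = ⋃ ω ∈ g ⁻¹' t, condAtom m ω := by
    refine subset_antisymm (fun x hx => Set.mem_biUnion hx (mem_condAtom_self x)) ?_
    simp only [Set.iUnion_subset_iff]
    intro ω hω x hx
    rwa [Set.mem_preimage, h ω x hx]
  rw [this]
  exact MeasurableSet.biUnion (Set.to_countable _) fun ω _ => measurableSet_condAtom ω

end condAtom

section condRange

variable {Ω : Type*} {m mΩ : MeasurableSpace Ω} (μ : Measure Ω) (f : Ω → ℝ)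

lemma condRange_eq_of_mem_condAtom {ω ω' : Ω} (h : ω' ∈ condAtom m ω) :
    condRange μ m f ω' = condRange μ m f ω := by
  rw [condRange, condRange, condAtom_eq_of_mem h]

lemma measurable_condRange [Countable Ω] : Measurable[m] (condRange μ m f) :=
  measurable_of_forall_mem_condAtom fun _ _ h => condRange_eq_of_mem_condAtom μ f h

end condRange

lemma setIntegral_eq_measureReal_mul_integral_cond {Ω : Type*} {mΩ : MeasurableSpace Ω}
    {μ : Measure Ω} [IsFiniteMeasure μ] {s : Set Ω} (hs : μ s ≠ 0) (f : Ω → ℝ) :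
    ∫ x in s, f x ∂μ = μ.real s * ∫ x, f x ∂μ[|s] := by
  rw [ProbabilityTheory.cond, integral_smul_measure, smul_eq_mul, ← mul_assoc, measureReal_def,
    ← ENNReal.toReal_mul, ENNReal.mul_inv_cancel hs (measure_ne_top μ s), ENNReal.toReal_one,
    one_mul]

section finite

variable {Ω : Type*} [Fintype Ω] {m mΩ : MeasurableSpace Ω} {μ : Measure Ω}

lemma Measurable.integrable_of_finite [IsFiniteMeasure μ] {f : Ω → ℝ} (hf : Measurable f) :
    Integrable f μ := by
  obtain ⟨C, hC⟩ := Finite.exists_le fun ω => ‖f ω‖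
  exact .of_bound hf.aestronglyMeasurable C (ae_of_all μ hC)

lemma integral_eq_sum_condAtom [DecidableEq (Set Ω)] (hm : m ≤ mΩ) {f : Ω → ℝ}
    (hf : Integrable f μ) :
    ∫ x, f x ∂μ = ∑ A ∈ Finset.univ.image (condAtom m), ∫ x in A, f x ∂μ := by
  have hcover : (⋃ A ∈ Finset.univ.image (condAtom m), A) = Set.univ :=
    Set.eq_univ_of_forall fun x =>
      Set.mem_biUnion (Finset.mem_image_of_mem _ (Finset.mem_univ x)) (mem_condAtom_self x)
  have hdisj : Set.PairwiseDisjoint (Finset.univ.image (condAtom m) : Set (Set Ω)) id := by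
    simp only [Finset.coe_image, Finset.coe_univ, Set.image_univ]
    rintro _ ⟨a, rfl⟩ _ ⟨b, rfl⟩ hab
    refine Set.disjoint_left.mpr fun x hxa hxb => hab ?_
    rw [← condAtom_eq_of_mem hxa, condAtom_eq_of_mem hxb]
  have h := integral_biUnion_finset (Finset.univ.image (condAtom m)) (s := fun A => A) (μ := μ)
    (by simpa using fun ω => hm _ (measurableSet_condAtom ω)) hdisj fun _ _ => hf.integrableOn
  rwa [hcover, setIntegral_univ] at h

lemma integral_mono_of_setIntegral_condAtom_le (hm : m ≤ mΩ) {f g : Ω → ℝ} (hf : Integrable f μ)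
    (hg : Integrable g μ) (h : ∀ ω, ∫ x in condAtom m ω, f x ∂μ ≤ ∫ x in condAtom m ω, g x ∂μ) :
    ∫ x, f x ∂μ ≤ ∫ x, g x ∂μ := by
  classical
  rw [integral_eq_sum_condAtom hm hf, integral_eq_sum_condAtom hm hg]
  exact Finset.sum_le_sum <| by simpa using h

/-- Hoeffding's lemma for the conditional law on the atom, under which `X` has mean `c` and lies
a.s. in an interval of length `condRange μ m X`. -/
lemma setIntegral_condAtom_exp_mul_le [IsFiniteMeasure μ] (hm : m ≤ mΩ) {X : Ω → ℝ}
    (hX : Measurable X) (ω : Ω) {c : ℝ}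
    (hmean : ∫ x in condAtom m ω, X x ∂μ = μ.real (condAtom m ω) * c) (s : ℝ) :
    ∫ x in condAtom m ω, exp (s * (X x - c)) ∂μ ≤
      μ.real (condAtom m ω) * exp (s ^ 2 / 8 * condRange μ m X ω ^ 2) := by
  set A := condAtom m ω
  have hA : MeasurableSet A := hm _ (measurableSet_condAtom ω)
  by_cases hA0 : μ A = 0
  · simp [Measure.restrict_eq_zero.mpr hA0, measureReal_def, hA0]
  have := cond_isProbabilityMeasure (μ := μ) hA0
  have hbdd (g : Ω → ℝ) : BddAbove {y | ∃ ω' ∈ A, μ {ω'} ≠ 0 ∧ g ω' = y} :=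
    ((Set.finite_range g).subset (by rintro _ ⟨ω', -, -, rfl⟩; exact ⟨ω', rfl⟩)).bddAbove
  set a := sSup {y | ∃ ω' ∈ A, μ {ω'} ≠ 0 ∧ X ω' = y}
  set b := sSup {y | ∃ ω' ∈ A, μ {ω'} ≠ 0 ∧ -X ω' = y}
  have hbounds : ∀ᵐ x ∂μ[|A], X x - c ∈ Set.Icc (-b - c) (a - c) := by
    filter_upwards [ae_cond_mem hA,
      cond_absolutelyContinuous.ae_le (ae_iff_of_countable.mpr fun _ h => h)] with x hxA hx
    have ha : X x ≤ a := le_csSup (hbdd X) ⟨x, hxA, hx, rfl⟩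
    have hb : -X x ≤ b := le_csSup (hbdd fun x => -X x) ⟨x, hxA, hx, rfl⟩
    constructor <;> linarith
  have hmean' : ∫ x, (X x - c) ∂μ[|A] = 0 := by
    have hApos : 0 < μ.real A := ENNReal.toReal_pos hA0 (measure_ne_top μ A)
    rw [setIntegral_eq_measureReal_mul_integral_cond hA0] at hmean
    rw [integral_sub hX.integrable_of_finite (integrable_const c), integral_const,
      mul_left_cancel₀ hApos.ne' hmean]
    simp
  have hoeff := (hasSubgaussianMGF_of_mem_Icc_of_integral_eq_zero (hX.sub_const c).aemeasurable
    hbounds hmean').mgf_le s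
  rw [setIntegral_eq_measureReal_mul_integral_cond hA0]
  refine mul_le_mul_of_nonneg_left (hoeff.trans_eq ?_) measureReal_nonneg
  rw [show condRange μ m X ω = a + b from rfl, coe_nnnorm_div_two_sq]
  ring_nf

lemma integral_mul_exp_sub_condRange_sq_le [IsFiniteMeasure μ] (hm : m ≤ mΩ) {W Y Y' : Ω → ℝ}
    (hW : Measurable[m] W) (hW0 : 0 ≤ W) (hY : Measurable[m] Y) (hY' : Measurable Y')
    (hcondExp : μ[Y' | m] =ᵐ[μ] Y) (s : ℝ) :
    ∫ ω, W ω * exp (s * (Y' ω - Y ω) - s ^ 2 / 8 * condRange μ m Y' ω ^ 2) ∂μ ≤ ∫ ω, W ω ∂μ := by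
  have hRm : Measurable (condRange μ m Y') := (measurable_condRange μ Y').mono hm le_rfl
  have hWm : Measurable W := hW.mono hm le_rfl
  have hYm : Measurable Y := hY.mono hm le_rfl
  refine integral_mono_of_setIntegral_condAtom_le hm
    (Measurable.integrable_of_finite (by fun_prop)) hWm.integrable_of_finite fun ω => ?_
  set A := condAtom m ω
  have hA : MeasurableSet A := hm _ (measurableSet_condAtom ω)
  have hW_eq (x) (hx : x ∈ A) : W x = W ω := hW.eq_of_mem_condAtom hx
  have hY_eq (x) (hx : x ∈ A) : Y x = Y ω := hY.eq_of_mem_condAtom hx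
  have hmean : ∫ x in A, Y' x ∂μ = μ.real A * Y ω := by
    rw [← setIntegral_condExp hm hY'.integrable_of_finite (measurableSet_condAtom ω),
      setIntegral_congr_ae hA (hcondExp.mono fun x hx _ => hx), setIntegral_congr_fun hA hY_eq,
      setIntegral_const, smul_eq_mul]
  set R := condRange μ m Y' ω
  calc ∫ x in A, W x * exp (s * (Y' x - Y x) - s ^ 2 / 8 * condRange μ m Y' x ^ 2) ∂μ
      = W ω * exp (-(s ^ 2 / 8 * R ^ 2)) * ∫ x in A, exp (s * (Y' x - Y ω)) ∂μ := by
        rw [← integral_const_mul]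
        refine setIntegral_congr_fun hA fun x hx => ?_
        rw [hW_eq x hx, hY_eq x hx, condRange_eq_of_mem_condAtom μ Y' hx, sub_eq_add_neg, exp_add]
        ring
    _ ≤ W ω * exp (-(s ^ 2 / 8 * R ^ 2)) * (μ.real A * exp (s ^ 2 / 8 * R ^ 2)) :=
        mul_le_mul_of_nonneg_left (setIntegral_condAtom_exp_mul_le hm hY' ω hmean s)
          (mul_nonneg (hW0 ω) (exp_pos _).le)
    _ = μ.real A * W ω * (exp (-(s ^ 2 / 8 * R ^ 2)) * exp (s ^ 2 / 8 * R ^ 2)) := by ring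
    _ = ∫ x in A, W x ∂μ := by
        rw [← exp_add, neg_add_cancel, exp_zero, mul_one, setIntegral_congr_fun hA hW_eq,
          setIntegral_const, smul_eq_mul]

end finite

lemma ProbabilityTheory.HasSubgaussianMGF.measureReal_abs_ge_le {Ω : Type*}
    {mΩ : MeasurableSpace Ω} {μ : Measure Ω} [IsFiniteMeasure μ] {X : Ω → ℝ} {c : NNReal}
    (h : HasSubgaussianMGF X c μ) {ε : ℝ} (hε : 0 ≤ ε) :
    μ.real {ω | ε ≤ |X ω|} ≤ 2 * exp (-ε ^ 2 / (2 * c)) := by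
  have hsub : {ω | ε ≤ |X ω|} ⊆ {ω | ε ≤ X ω} ∪ {ω | ε ≤ (-X) ω} := fun ω (hω : ε ≤ |X ω|) =>
    show ε ≤ X ω ∨ ε ≤ -X ω from le_abs.mp hω
  calc μ.real {ω | ε ≤ |X ω|}
      ≤ μ.real {ω | ε ≤ X ω} + μ.real {ω | ε ≤ (-X) ω} :=
        (measureReal_mono hsub).trans (measureReal_union_le _ _)
    _ ≤ exp (-ε ^ 2 / (2 * c)) + exp (-ε ^ 2 / (2 * c)) :=
        add_le_add (h.measure_ge_le hε) (h.neg.measure_ge_le hε)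
    _ = 2 * exp (-ε ^ 2 / (2 * c)) := by ring

noncomputable def expSupermartingale {Ω : Type*} [MeasurableSpace Ω] (μ : Measure Ω)
    (F : ℕ → MeasurableSpace Ω) (Y : ℕ → Ω → ℝ) (c s : ℝ) (n : ℕ) (ω : Ω) : ℝ :=
  exp (s * (Y n ω - c) - s ^ 2 / 8 * ∑ j ∈ Finset.Icc 1 n, condRange μ (F (j - 1)) (Y j) ω ^ 2)

section martingale

variable {Ω : Type*} {mΩ : MeasurableSpace Ω} {μ : Measure Ω}
  {F : ℕ → MeasurableSpace Ω} {Y : ℕ → Ω → ℝ}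

lemma expSupermartingale_succ (c s : ℝ) (n : ℕ) (ω : Ω) :
    expSupermartingale μ F Y c s (n + 1) ω = expSupermartingale μ F Y c s n ω *
      exp (s * (Y (n + 1) ω - Y n ω) - s ^ 2 / 8 * condRange μ (F n) (Y (n + 1)) ω ^ 2) := by
  rw [expSupermartingale, expSupermartingale, ← exp_add, Finset.sum_Icc_succ_top (by omega),
    Nat.add_sub_cancel]
  ring_nf

lemma measurable_expSupermartingale [Countable Ω] (hFmono : Monotone F) (c s : ℝ) {n : ℕ}
    (hY : Measurable[F n] (Y n)) : Measurable[F n] (expSupermartingale μ F Y c s n) := by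
  refine ((hY.sub_const c).const_mul s).sub (Measurable.const_mul ?_ _) |>.exp
  refine Finset.measurable_sum _ fun j hj => ?_
  exact ((measurable_condRange μ (Y j)).mono (hFmono (by grind)) le_rfl).pow_const 2

lemma integral_expSupermartingale_le_one [Fintype Ω] [IsProbabilityMeasure μ]
    (hFmono : Monotone F) (hFle : ∀ i, F i ≤ mΩ) (n : ℕ)
    (hadapted : ∀ i, i ≤ n → StronglyMeasurable[F i] (Y i))
    (hmart : ∀ j, 1 ≤ j → j ≤ n → μ[Y j | F (j - 1)] =ᵐ[μ] Y (j - 1)) {c : ℝ}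
    (hY0 : ∀ ω, Y 0 ω = c) (s : ℝ) :
    ∫ ω, expSupermartingale μ F Y c s n ω ∂μ ≤ 1 := by
  induction n with
  | zero => simp [expSupermartingale, hY0]
  | succ n ih =>
    have hYn : Measurable[F n] (Y n) := (hadapted n n.le_succ).measurable
    calc ∫ ω, expSupermartingale μ F Y c s (n + 1) ω ∂μ
        ≤ ∫ ω, expSupermartingale μ F Y c s n ω ∂μ := by
          simp only [expSupermartingale_succ]
          exact integral_mul_exp_sub_condRange_sq_le (hFle n)
            (measurable_expSupermartingale hFmono c s hYn) (fun _ => (exp_pos _).le) hYn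
            ((hadapted _ le_rfl).measurable.mono (hFle _) le_rfl)
            (hmart (n + 1) (by omega) le_rfl) s
      _ ≤ 1 := ih (fun i hi => hadapted i (by omega)) fun j hj hjn => hmart j hj (by omega)

end martingale

lemma hasSubgaussianMGF_of_sum_condRange_sq_le {Ω : Type*} [Fintype Ω]
    {mΩ : MeasurableSpace Ω} {μ : Measure Ω} [IsProbabilityMeasure μ]
    {F : ℕ → MeasurableSpace Ω} {Y : ℕ → Ω → ℝ}
    (hFmono : Monotone F) (hFle : ∀ i, F i ≤ mΩ) (hF0 : F 0 = ⊥) (n : ℕ)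
    (hadapted : ∀ i, i ≤ n → StronglyMeasurable[F i] (Y i))
    (hmart : ∀ j, 1 ≤ j → j ≤ n → μ[Y j | F (j - 1)] =ᵐ[μ] Y (j - 1)) {r : ℝ}
    (hran : ∀ᵐ ω ∂μ, ∑ j ∈ Finset.Icc 1 n, condRange μ (F (j - 1)) (Y j) ω ^ 2 ≤ r ^ 2) :
    HasSubgaussianMGF (fun ω => Y n ω - ∫ ω', Y 0 ω' ∂μ) ((‖r‖₊ / 2) ^ 2) μ := by
  obtain ⟨c, hc⟩ := stronglyMeasurable_bot_iff.mp (hF0 ▸ hadapted 0 n.zero_le)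
  have hY0 : ∀ ω, Y 0 ω = c := congrFun hc
  have hYn : Measurable (Y n) := (hadapted n le_rfl).measurable.mono (hFle n) le_rfl
  have hZ (s : ℝ) : Measurable (expSupermartingale μ F Y c s n) :=
    (measurable_expSupermartingale hFmono c s (hadapted n le_rfl).measurable).mono (hFle n) le_rfl
  rw [show ∫ ω', Y 0 ω' ∂μ = c by simp [hc]]
  refine ⟨fun s => Measurable.integrable_of_finite (by fun_prop), fun s => ?_⟩
  calc ∫ ω, exp (s * (Y n ω - c)) ∂μ
      ≤ ∫ ω, expSupermartingale μ F Y c s n ω * exp (s ^ 2 / 8 * r ^ 2) ∂μ := by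
        refine integral_mono_ae (Measurable.integrable_of_finite (by fun_prop))
          (Measurable.integrable_of_finite (by fun_prop)) ?_
        filter_upwards [hran] with ω hω
        rw [expSupermartingale, ← exp_add, exp_le_exp]
        nlinarith [mul_le_mul_of_nonneg_left hω (by positivity : 0 ≤ s ^ 2 / 8)]
    _ = (∫ ω, expSupermartingale μ F Y c s n ω ∂μ) * exp (s ^ 2 / 8 * r ^ 2) :=
        integral_mul_const _ _
    _ ≤ exp (s ^ 2 / 8 * r ^ 2) :=
        mul_le_of_le_one_left (exp_pos _).le
          (integral_expSupermartingale_le_one hFmono hFle n hadapted hmart hY0 s)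
    _ = exp ((((‖r‖₊ / 2) ^ 2 : NNReal) : ℝ) * s ^ 2 / 2) := by
        rw [coe_nnnorm_div_two_sq]
        ring_nf

theorem mcdiarmid_tail_bound {Ω : Type*} [Fintype Ω] {mΩ : MeasurableSpace Ω}
    (μ : Measure Ω) [IsProbabilityMeasure μ]
    (n : ℕ) (F : ℕ → MeasurableSpace Ω) (Y : ℕ → Ω → ℝ)
    -- `F 0 ⊆ F 1 ⊆ ⋯ ⊆ F n` is a filter of σ-subfields of `mΩ` with `F 0 = {∅, Ω}`
    (hFmono : Monotone F) (hFle : ∀ i, F i ≤ mΩ) (hF0 : F 0 = ⊥)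
    -- `Y 0, …, Y n` is a martingale with respect to `F`
    (hadapted : ∀ i, i ≤ n → StronglyMeasurable[F i] (Y i))
    (hmart : ∀ j, 1 ≤ j → j ≤ n → μ[Y j | F (j - 1)] =ᵐ[μ] Y (j - 1))
    (r : ℝ)
    (hran : ∀ᵐ ω ∂μ, ∑ j ∈ Finset.Icc 1 n, (condRange μ (F (j - 1)) (Y j) ω) ^ 2 ≤ r ^ 2) :
    ∀ t : ℝ, 0 < t →
      (μ {ω | t ≤ |Y n ω - ∫ ω', Y 0 ω' ∂μ|}).toReal ≤
        2 * Real.exp (-2 * t ^ 2 / r ^ 2) := by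
  intro t ht
  refine ((hasSubgaussianMGF_of_sum_condRange_sq_le hFmono hFle hF0 n hadapted hmart
    hran).measureReal_abs_ge_le ht.le).trans_eq ?_
  rw [coe_nnnorm_div_two_sq]
  ring_nf
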